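/- Define y⁽⁰⁾ = y and y⁽ᵗ⁾ = K(K+λI)⁻¹(α y + (1−α)y⁽ᵗ⁻¹⁾). For α ∈ [0,1], y⁽ᵗ⁾ converges as τ → ∞ to y⁽∞⁾ = α K(αK + λI)⁻¹ y. -/

import Mathlib

/-!
Diagonalise `K = U diag(μ) Uᵀ` with `μ ≥ 0`; every matrix in the recursion is then
`U diag(f(μ)) Uᵀ` for a scalar function `f`. The error `yₜ - y∞` is multiplied at each step by
`(1 - α) K (K + λI)⁻¹`, whose eigenvalues `(1 - α) μ / (μ + λ)` lie in `[0, 1)`, so it tends to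
zero. That `y∞` is a fixed point of the recursion is the scalar identity
`α μ / (α μ + λ) = α μ / (μ + λ) + (1 - α) · μ / (μ + λ) · α μ / (α μ + λ)`.
-/

open Filter Topology

namespace Matrix

variable {m R : Type*} [Fintype m] [DecidableEq m]

theorem iterate_affine_eq [CommRing R] (B : Matrix m m R) {b x : m → R} {xs : ℕ → m → R}
    (hrec : ∀ t, xs (t + 1) = b + B *ᵥ xs t) (hfix : x = b + B *ᵥ x) (t : ℕ) :
    xs t = x + (B ^ t) *ᵥ (xs 0 - x) := by
  induction t with
  | zero => simp
  | succ t ih =>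
    rw [hrec, ih, mulVec_add, pow_succ', ← mulVec_mulVec, ← add_assoc, ← hfix]

theorem tendsto_iterate_affine [CommRing R] [TopologicalSpace R] [IsTopologicalRing R]
    {B : Matrix m m R} (hB : Tendsto (B ^ ·) atTop (𝓝 0)) {b x : m → R} {xs : ℕ → m → R}
    (hrec : ∀ t, xs (t + 1) = b + B *ᵥ xs t) (hfix : x = b + B *ᵥ x) :
    Tendsto xs atTop (𝓝 x) := by
  have hmul : Continuous fun M : Matrix m m R => M *ᵥ (xs 0 - x) :=
    continuous_id.matrix_mulVec continuous_const
  have := tendsto_const_nhds (x := x).add ((hmul.tendsto 0).comp hB)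
  simpa only [zero_mulVec, add_zero, Function.comp_def, ← iterate_affine_eq B hrec hfix] using this

/-- With `U` the eigenvector unitary of a Hermitian matrix `A`, this sends `f ∘ eigenvalues` to
`f(A)`. -/
noncomputable def unitaryDiagonal [Field R] [StarRing R] (U : unitary (Matrix m m R)) :
    (m → R) →ₐ[R] Matrix m m R :=
  (AlgHomClass.toAlgHom (Unitary.conjStarAlgAut R _ U)).comp (diagonalAlgHom R)

theorem unitaryDiagonal_apply [Field R] [StarRing R] (U : unitary (Matrix m m R)) (d : m → R) :
    unitaryDiagonal U d = U * diagonal d * star (U : Matrix m m R) := rfl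

theorem inv_unitaryDiagonal [Field R] [StarRing R] (U : unitary (Matrix m m R)) {d : m → R}
    (hd : ∀ i, d i ≠ 0) : (unitaryDiagonal U d)⁻¹ = unitaryDiagonal U d⁻¹ := by
  refine inv_eq_right_inv ?_
  rw [← map_mul, ← map_one (unitaryDiagonal U)]
  congr 1
  funext i
  exact mul_inv_cancel₀ (hd i)

theorem tendsto_pow_unitaryDiagonal [NormedField R] [StarRing R] (U : unitary (Matrix m m R))
    {d : m → R} (hd : ∀ i, ‖d i‖ < 1) :
    Tendsto (unitaryDiagonal U d ^ ·) atTop (𝓝 0) := by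
  have hcont : Continuous (unitaryDiagonal U) :=
    show Continuous fun d => (U : Matrix m m R) * diagonal d * star (U : Matrix m m R) by fun_prop
  have hpow : Tendsto (d ^ ·) atTop (𝓝 0) :=
    tendsto_pi_nhds.2 fun i => tendsto_pow_atTop_nhds_zero_of_norm_lt_one (hd i)
  simpa only [Function.comp_def, map_pow, map_zero] using (hcont.tendsto 0).comp hpow

theorem unitaryDiagonal_mul_inv_smul_add_smul_one [Field R] [StarRing R]
    (U : unitary (Matrix m m R)) (d : m → R) (c s : R) (h : ∀ i, c * d i + s ≠ 0) :
    unitaryDiagonal U d * (c • unitaryDiagonal U d + s • 1)⁻¹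
      = unitaryDiagonal U fun i => d i / (c * d i + s) := by
  have hsum : c • unitaryDiagonal U d + s • 1 = unitaryDiagonal U fun i => c * d i + s := by
    rw [← map_one (unitaryDiagonal U), ← map_smul, ← map_smul, ← map_add]
    congr 1
    ext i
    simp
  rw [hsum, inv_unitaryDiagonal U h, ← map_mul]
  congr 1
  ext i
  simp [div_eq_mul_inv]

theorem IsHermitian.eq_unitaryDiagonal_eigenvalues {A : Matrix m m ℝ} (hA : A.IsHermitian) :
    A = unitaryDiagonal hA.eigenvectorUnitary hA.eigenvalues := by
  simpa [unitaryDiagonal_apply] using hA.spectral_theorem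

end Matrix

open Matrix

theorem abs_mul_div_add_lt_one {c x s : ℝ} (hc0 : 0 ≤ c) (hc1 : c ≤ 1) (hx : 0 ≤ x)
    (hs : 0 < s) : |c * (x / (x + s))| < 1 := by
  rw [abs_of_nonneg (by positivity)]
  calc c * (x / (x + s)) ≤ x / (x + s) := mul_le_of_le_one_left (by positivity) hc1
    _ < 1 := (div_lt_one (by linarith)).2 (by linarith)

theorem self_distillation_limit_general (n : ℕ) (K : Matrix (Fin n) (Fin n) ℝ)
    (hK : K.PosSemidef) (lam : ℝ) (hlam : 0 < lam) (α : ℝ)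
    (hα : α ∈ Set.Icc (0:ℝ) 1) (y : Fin n → ℝ) (yseq : ℕ → (Fin n → ℝ))
    (hrec : ∀ t : ℕ, yseq (t + 1)
      = (K * (K + lam • (1 : Matrix (Fin n) (Fin n) ℝ))⁻¹).mulVec
          (α • y + (1 - α) • yseq t)) :
    Tendsto yseq atTop
      (nhds ((α • (K * (α • K + lam • (1 : Matrix (Fin n) (Fin n) ℝ))⁻¹)).mulVec y)) := by
  obtain ⟨hα0, hα1⟩ := hα
  set φ := unitaryDiagonal hK.isHermitian.eigenvectorUnitary
  set μ := hK.isHermitian.eigenvalues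
  have hμ : ∀ i, 0 ≤ μ i := hK.eigenvalues_nonneg
  have hfrac : ∀ c, 0 ≤ c → K * (c • K + lam • 1)⁻¹ = φ fun i => μ i / (c * μ i + lam) := by
    intro c hc
    rw [hK.isHermitian.eq_unitaryDiagonal_eigenvalues]
    exact unitaryDiagonal_mul_inv_smul_add_smul_one _ μ c lam fun i => by nlinarith [hμ i]
  have hA : K * (K + lam • 1)⁻¹ = φ fun i => μ i / (μ i + lam) := by
    simpa only [one_smul, one_mul] using hfrac 1 zero_le_one
  rw [hfrac α hα0]
  refine tendsto_iterate_affine (B := (1 - α) • (K * (K + lam • 1)⁻¹))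
    (b := (α • (K * (K + lam • 1)⁻¹)) *ᵥ y) ?_ (fun t => ?_) ?_
  · rw [hA, ← map_smul]
    exact tendsto_pow_unitaryDiagonal _ fun i =>
      abs_mul_div_add_lt_one (by linarith) (by linarith) (hμ i) hlam
  · rw [hrec, mulVec_add, mulVec_smul, mulVec_smul, smul_mulVec, smul_mulVec]
  · rw [hA, mulVec_mulVec, ← add_mulVec]
    congr 1
    simp only [← map_smul, ← map_mul, ← map_add]
    congr 1
    ext i
    simp only [Pi.smul_apply, smul_eq_mul, Pi.add_apply, Pi.mul_apply]
    have : μ i + lam ≠ 0 := by linarith [hμ i]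
    have : α * μ i + lam ≠ 0 := by nlinarith [hμ i]
    field_simp
    ring

/-- The self-distillation iterates converge to `α K(αK + λI)⁻¹ y`. -/
theorem self_distillation_limit (n : ℕ) (K : Matrix (Fin n) (Fin n) ℝ)
    (hK : K.PosSemidef) (lam : ℝ) (hlam : 0 < lam) (α : ℝ)
    (hα : α ∈ Set.Icc (0:ℝ) 1) (y : Fin n → ℝ) (yseq : ℕ → (Fin n → ℝ))
    (h0 : yseq 0 = y)
    (hrec : ∀ t : ℕ, yseq (t + 1)
      = (K * (K + lam • (1 : Matrix (Fin n) (Fin n) ℝ))⁻¹).mulVec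
          (α • y + (1 - α) • yseq t)) :
    Tendsto yseq atTop
      (nhds ((α • (K * (α • K + lam • (1 : Matrix (Fin n) (Fin n) ℝ))⁻¹)).mulVec y)) :=
  self_distillation_limit_general n K hK lam hlam α hα y yseq hrec
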